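/- Let H⃗ be a directed acyclic graph with vertex ordering π that does not contain a k-reachable-cycle for any k ≥ 3 but contains a k-reachable-simplex for some k ≥ 3. Let k′ be the minimum k such that H⃗ contains a k-reachable-simplex, and let X, Y form a k′-reachable-simplex minimizing the total ordering Σ_{v ∈ X} π(v). Let V ⊆ V(H⃗) ∖ X be a set of vertices that is connected in the underlying undirected graph of H⃗ and such that every v ∈ V reaches at least one vertex of X. Then X is not contained in Reach(V). -/

import Mathlib

open scoped Classical

noncomputable section

/-- A hypergraph: a finite vertex set and a finite set of hyperedges, with vertices in `ℕ`. -/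
structure NHypergraph where
  verts : Finset ℕ
  edges : Finset (Finset ℕ)

namespace NHypergraph

/-- Well-formedness: every hyperedge is a nonempty subset of the vertex set. -/
def Good (G : NHypergraph) : Prop := ∀ e ∈ G.edges, e ⊆ G.verts ∧ e.Nonempty

/-- The rank of a hypergraph: the maximum arity of a hyperedge. -/
def rank (G : NHypergraph) : ℕ := G.edges.sup Finset.card

/-- The induced `l`-trimmed subhypergraph of `G` on `S`. -/
def trim (G : NHypergraph) (S : Finset ℕ) (l : ℕ∞) : NHypergraph :=
  ⟨G.verts ∩ S,
    (G.edges.filter fun e => ((e \ S).card : ℕ∞) ≤ l ∧ (e ∩ S).Nonempty).image fun e => e ∩ S⟩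

/-- The degree of a vertex: the number of hyperedges containing it. -/
def degree (G : NHypergraph) (v : ℕ) : ℕ := (G.edges.filter fun e => v ∈ e).card

/-- The `l`-degeneracy of a hypergraph: the least `κ` such that every nonempty induced
`l`-trimmed subhypergraph has a vertex of degree at most `κ`. -/
def degeneracy (G : NHypergraph) (l : ℕ∞) : ℕ :=
  sInf {κ : ℕ | ∀ S ⊆ G.verts, S.Nonempty → ∃ v ∈ S, (G.trim S l).degree v ≤ κ}

/-- Two vertices are adjacent if some hyperedge contains both. -/
def Adj (G : NHypergraph) (u v : ℕ) : Prop := ∃ e ∈ G.edges, u ∈ e ∧ v ∈ e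

/-- A hypergraph is connected if any two vertices are joined by a path of adjacencies. -/
def Connected (G : NHypergraph) : Prop :=
  ∀ u ∈ G.verts, ∀ v ∈ G.verts, Relation.ReflTransGen G.Adj u v

/-- `D` is a connected component of `G`. -/
def IsComponent (G : NHypergraph) (D : Finset ℕ) : Prop :=
  ∃ v ∈ G.verts, D = G.verts.filter fun u => Relation.ReflTransGen G.Adj v u

/-- The induced subhypergraph (only hyperedges entirely inside `S`). -/
def induce (G : NHypergraph) (S : Finset ℕ) : NHypergraph :=
  ⟨G.verts ∩ S, G.edges.filter fun e => e ⊆ S⟩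

end NHypergraph

/-- `f` is a homomorphism from `H` to `G`. -/
def IsHom (H G : NHypergraph) (f : ℕ → ℕ) : Prop :=
  (∀ v ∈ H.verts, f v ∈ G.verts) ∧ ∀ e ∈ H.edges, e.image f ∈ G.edges

/-- `Hom(G,H)`: the number of homomorphisms from `H` to `G`
(normalized to be `0` off `V(H)` so that the set is finite). -/
def homCount (G H : NHypergraph) : ℕ :=
  Set.ncard {f : ℕ → ℕ | IsHom H G f ∧ ∀ v ∉ H.verts, f v = 0}

/-- `Homr(G,H)`: the number of arity-preserving homomorphisms from `H` to `G`. -/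
def homrCount (G H : NHypergraph) : ℕ :=
  Set.ncard {f : ℕ → ℕ | IsHom H G f ∧ (∀ e ∈ H.edges, (e.image f).card = e.card) ∧
    ∀ v ∉ H.verts, f v = 0}

/-- Hypergraph isomorphism. -/
def Isomorphic (H H' : NHypergraph) : Prop :=
  ∃ f : ℕ → ℕ, Set.BijOn f ↑H.verts ↑H'.verts ∧
    H'.edges = H.edges.image fun e => e.image f

/-- The quotient of `H` under the partition of `V(H)` into the fibers of `f`. -/
def quotientBy (H : NHypergraph) (f : ℕ → ℕ) : NHypergraph :=
  ⟨H.verts.image f, H.edges.image fun e => e.image f⟩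

/-- `H'` is a quotient of `H` (by some partition of `V(H)`). -/
def IsQuotient (H H' : NHypergraph) : Prop := ∃ f : ℕ → ℕ, H' = quotientBy H f

/-- Each fiber of `f` induces a connected (trimmed) subhypergraph of `H`. -/
def ContractMap (H : NHypergraph) (f : ℕ → ℕ) : Prop :=
  ∀ w : ℕ, (H.trim (H.verts.filter fun v => f v = w) ⊤).Connected

/-- `H'` belongs to the contract set `Q^c(H)`: it is a quotient of `H` by a partition
all of whose parts induce connected subhypergraphs of `H`. -/
def IsContractQuotient (H H' : NHypergraph) : Prop :=
  ∃ f : ℕ → ℕ, ContractMap H f ∧ H' = quotientBy H f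

/-- `α(H')`: the number of partitions `τ` of `V(H)` with connected parts with `H/τ ≅ H'`. -/
def alphaCount (H H' : NHypergraph) : ℕ :=
  Set.ncard {P : Finset (Finset ℕ) | ∃ f : ℕ → ℕ, ContractMap H f ∧
    Isomorphic (quotientBy H f) H' ∧
    P = (H.verts.image f).image fun w => H.verts.filter fun v => f v = w}

/-- `|Aut(H')|`: the number of automorphisms of `H'`. -/
def autCount (H' : NHypergraph) : ℕ :=
  Set.ncard {f : ℕ → ℕ | (∀ v ∉ H'.verts, f v = v) ∧ Set.BijOn f ↑H'.verts ↑H'.verts ∧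
    H'.edges.image (fun e => e.image f) = H'.edges}

/-- The arc relation of the `l`-skeleton of the DAH obtained by ordering `G` by `π`. -/
def SkelArc (G : NHypergraph) (π : ℕ → ℕ) (l : ℕ∞) (u v : ℕ) : Prop :=
  ∃ e ∈ G.edges, u ∈ e ∧ v ∈ e ∧ π u < π v ∧
    ((e.filter fun w => π w < π u).card : ℕ∞) ≤ l

/-- The `l`-outdegree of a vertex in the DAH `(G, π)`. -/
def loutdeg (G : NHypergraph) (π : ℕ → ℕ) (l : ℕ∞) (u : ℕ) : ℕ :=
  (G.verts.filter fun v => SkelArc G π l u v).card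

/-- Vertices reachable from `v` by a directed path. -/
def Reach (Adj : ℕ → ℕ → Prop) (v : ℕ) : Set ℕ := {u | Relation.ReflTransGen Adj v u}

/-- Vertices reachable from a set `A`. -/
def ReachSet (Adj : ℕ → ℕ → Prop) (A : Set ℕ) : Set ℕ :=
  {u | ∃ a ∈ A, Relation.ReflTransGen Adj a u}

/-- The sources of a DAG: vertices with no incoming arc. -/
def sourcesOf (V : Finset ℕ) (Adj : ℕ → ℕ → Prop) : Finset ℕ :=
  V.filter fun v => ¬ ∃ u ∈ V, Adj u v

/-- `b` lies on the (unique) path between `i` and `j` in `T`. -/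
def OnPath {n : ℕ} (T : SimpleGraph (Fin n)) (i j b : Fin n) : Prop :=
  ∃ p : T.Walk i j, p.IsPath ∧ b ∈ p.support

/-- `(T, β)` is a DAG-tree decomposition of the DAG `(V, Adj)`. -/
def IsDTD (V : Finset ℕ) (Adj : ℕ → ℕ → Prop) {n : ℕ}
    (T : SimpleGraph (Fin n)) (β : Fin n → Finset ℕ) : Prop :=
  T.IsTree ∧ (∀ i, β i ⊆ sourcesOf V Adj) ∧ (∀ s ∈ sourcesOf V Adj, ∃ i, s ∈ β i) ∧
    ∀ i j b, OnPath T i j b →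
      ReachSet Adj ↑(β i) ∩ ReachSet Adj ↑(β j) ⊆ ReachSet Adj ↑(β b)

/-- The DAG-treewidth of the DAG `(V, Adj)`. -/
def dagTreewidth (V : Finset ℕ) (Adj : ℕ → ℕ → Prop) : ℕ :=
  sInf {w : ℕ | ∃ (n : ℕ) (T : SimpleGraph (Fin n)) (β : Fin n → Finset ℕ),
    IsDTD V Adj T β ∧ ∀ i, (β i).card ≤ w}

/-- The `l`-DAG-treewidth of the DAH `(H, π)`. -/
def ldtwOriented (H : NHypergraph) (π : ℕ → ℕ) (l : ℕ∞) : ℕ :=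
  dagTreewidth H.verts (SkelArc H π l)

/-- The `l`-DAG-treewidth of an undirected hypergraph:
the maximum over all acyclic orientations. -/
def ldtw (H : NHypergraph) (l : ℕ∞) : ℕ :=
  sSup {w : ℕ | ∃ π : ℕ → ℕ, Set.InjOn π ↑H.verts ∧ w = ldtwOriented H π l}

/-- `f` is a DAH homomorphism from `(K, πK)` to `(G, πG)`. -/
def IsDAHHom (K : NHypergraph) (πK : ℕ → ℕ) (G : NHypergraph) (πG : ℕ → ℕ)
    (f : ℕ → ℕ) : Prop :=
  (∀ v ∈ K.verts, f v ∈ G.verts) ∧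
    ∀ e ∈ K.edges, e.image f ∈ G.edges ∧
      ∀ u ∈ e, ∀ v ∈ e, πK u < πK v → πG (f u) < πG (f v)

/-- The number of DAH homomorphisms from `(K, πK)` to `(G, πG)`. -/
def dahHomCount (G : NHypergraph) (πG : ℕ → ℕ) (K : NHypergraph) (πK : ℕ → ℕ) : ℕ :=
  Set.ncard {f : ℕ → ℕ | IsDAHHom K πK G πG f ∧ ∀ v ∉ K.verts, f v = 0}

/-- Two orderings of `H` give isomorphic acyclic orientations. -/
def OrientIso (H : NHypergraph) (π₁ π₂ : ℕ → ℕ) : Prop :=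
  ∃ g : ℕ → ℕ, Set.BijOn g ↑H.verts ↑H.verts ∧
    (H.edges.image fun e => e.image g) = H.edges ∧
    ∀ u ∈ H.verts, ∀ v ∈ H.verts, (π₁ u < π₁ v ↔ π₂ (g u) < π₂ (g v))

/-- The vertices of `H` that are `l`-reachable from the set `S` in the DAH `(H, π)`. -/
def reachClosure (H : NHypergraph) (π : ℕ → ℕ) (l : ℕ∞) (S : Set ℕ) : Finset ℕ :=
  H.verts.filter fun v => v ∈ ReachSet (SkelArc H π l) S

/-- `H⃗[S]_l`: the sub-DAH induced (0-trimmed) on the vertices `l`-reachable from `S`. -/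
def subDAH (H : NHypergraph) (π : ℕ → ℕ) (l : ℕ∞) (S : Set ℕ) : NHypergraph :=
  H.trim (reachClosure H π l S) 0

/-- `B'` is a child of `B` in the tree `T` rooted at `root`. -/
def IsChild {n : ℕ} (T : SimpleGraph (Fin n)) (root B B' : Fin n) : Prop :=
  T.Adj B B' ∧ OnPath T root B' B

/-- `Γ(B)`: the union of the bags in the subtree of `T` rooted at `B`. -/
def GammaSet {n : ℕ} (T : SimpleGraph (Fin n)) (root : Fin n)
    (β : Fin n → Finset ℕ) (B : Fin n) : Set ℕ :=
  {s | ∃ i, OnPath T root i B ∧ s ∈ β i}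

/-- `ext(φ, K⃗, G⃗)` relative to the agreement domain `dom`: the number of DAH homomorphisms
from `(K, πK)` to `(G, πG)` that agree with `φ` on `V(K) ∩ dom`. -/
def extCount (K : NHypergraph) (πK : ℕ → ℕ) (G : NHypergraph) (πG : ℕ → ℕ)
    (dom : Set ℕ) (φ : ℕ → ℕ) : ℕ :=
  Set.ncard {ψ : ℕ → ℕ | IsDAHHom K πK G πG ψ ∧ (∀ v ∉ K.verts, ψ v = 0) ∧
    ∀ v ∈ (↑K.verts : Set ℕ) ∩ dom, ψ v = φ v}

/-- The hyperedges `E_i` associated to a core `C` and a component `D`. -/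
def obstructionEdges (H : NHypergraph) (C D : Finset ℕ) : Finset (Finset ℕ) :=
  H.edges.filter fun e => e ⊆ C ∪ D ∧ 1 < e.card

/-- `H` is an `l`-obstruction (a member of `𝓗_l`). -/
def IsLObstruction (l : ℕ∞) (H : NHypergraph) : Prop :=
  ∃ k, 3 ≤ k ∧ ∃ C ⊆ H.verts, C.card = k ∧
    (∀ e ∈ (H.trim C l).edges, e.card ≤ 1) ∧
    (∀ D : Finset ℕ, (H.trim (H.verts \ C) ⊤).IsComponent D →
      ¬ C ⊆ (obstructionEdges H C D).biUnion id) ∧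
    ∃ Dmap : ℕ → Finset ℕ, Set.InjOn Dmap ↑C ∧
      ∀ c ∈ C, (H.trim (H.verts \ C) ⊤).IsComponent (Dmap c) ∧
        C.erase c ⊆ (obstructionEdges H C (Dmap c)).biUnion id ∧
        ∀ e ∈ obstructionEdges H C (Dmap c), c ∉ e

/-- `H` is `𝓗_l` ITS free: no induced ∞-trimmed subhypergraph is an `l`-obstruction. -/
def ITSFree (l : ℕ∞) (H : NHypergraph) : Prop :=
  ∀ S ⊆ H.verts, ¬ IsLObstruction l (H.trim S ⊤)

/-- The hypergraph `(Hv, He)` is an `l`-connector of `X ⊆ Hv`. -/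
def IsConnector (l : ℕ∞) (Hv : Finset ℕ) (He : Finset (Finset ℕ)) (X : Finset ℕ) : Prop :=
  X ⊆ Hv ∧ NHypergraph.Connected ⟨Hv, He⟩ ∧
    (∀ e ∈ He, 2 ≤ (e ∩ X).card → l < ((e \ X).card : ℕ∞)) ∧
    ∃ V' : Finset ℕ, (NHypergraph.trim ⟨Hv, He⟩ (Hv \ X) ⊤).IsComponent V' ∧
      ∀ xx ∈ X, ∃ v ∈ V', ∃ e ∈ He, xx ∈ e ∧ v ∈ e

/-- Witness data for membership of `H` in `𝓗_{l,k}`. -/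
def InHlkWitness (l : ℕ∞) (k : ℕ) (H : NHypergraph)
    (x : ℕ → ℕ) (Vp : ℕ → Finset ℕ) (Ep : ℕ → Finset (Finset ℕ)) : Prop :=
  Set.InjOn x ↑(Finset.range k) ∧
  (∀ i < k, ∀ j < k, i ≠ j → Disjoint (Vp i) (Vp j)) ∧
  (∀ i < k, Disjoint (Vp i) ((Finset.range k).image x)) ∧
  H.verts = (Finset.range k).image x ∪ (Finset.range k).biUnion Vp ∧
  (∀ i < k, ∀ j < k, i ≠ j → Disjoint (Ep i) (Ep j)) ∧
  H.edges = (Finset.range k).biUnion Ep ∧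
  ∀ i < k,
    (∀ e ∈ Ep i, e ⊆ Vp i ∪ (((Finset.range k).image x).erase (x i))) ∧
    IsConnector l (Vp i ∪ (((Finset.range k).image x).erase (x i))) (Ep i)
      (((Finset.range k).image x).erase (x i))

/-- `H ∈ 𝓗_{l,k}`. -/
def InHlk (l : ℕ∞) (k : ℕ) (H : NHypergraph) : Prop :=
  ∃ x Vp Ep, InHlkWitness l k H x Vp Ep

/-- The DAG `(V, Adj)` contains a `k`-reachable-cycle. -/
def HasReachCycle (V : Finset ℕ) (Adj : ℕ → ℕ → Prop) (k : ℕ) : Prop :=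
  ∃ x y : ZMod k → ℕ, Function.Injective x ∧ Function.Injective y ∧
    (∀ i, x i ∈ V) ∧ (∀ i, y i ∈ V) ∧
    (∀ i, x i ∈ Reach Adj (y i) ∧ x (i + 1) ∈ Reach Adj (y i)) ∧
    ∀ v ∈ V, 2 ≤ (Set.range x ∩ Reach Adj v).ncard →
      ∃ i, Set.range x ∩ Reach Adj v = {x i, x (i + 1)}

/-- `(x, y)` form a `k`-reachable-simplex in the DAG `(V, Adj)`. -/
def IsReachSimplexPair (V : Finset ℕ) (Adj : ℕ → ℕ → Prop) {k : ℕ}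
    (x y : Fin k → ℕ) : Prop :=
  Function.Injective x ∧ Function.Injective y ∧
    (∀ i, x i ∈ V) ∧ (∀ i, y i ∈ V) ∧
    (∀ i j, j ≠ i → x j ∈ Reach Adj (y i)) ∧
    ¬ ∃ v ∈ V, ∀ i, x i ∈ Reach Adj v

/-- The DAG `(V, Adj)` contains a `k`-reachable-simplex. -/
def HasReachSimplex (V : Finset ℕ) (Adj : ℕ → ℕ → Prop) (k : ℕ) : Prop :=
  ∃ x y : Fin k → ℕ, IsReachSimplexPair V Adj x y

/-- `F` is α-acyclic. -/
def IsAlphaAcyclic (F : NHypergraph) : Prop :=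
  ∃ (n : ℕ) (T : SimpleGraph (Fin n)) (f : Fin n → Finset ℕ),
    T.IsTree ∧ Function.Injective f ∧ (∀ i, f i ∈ F.edges) ∧
    (∀ e ∈ F.edges, ∃ i, f i = e) ∧
    ∀ i j b, OnPath T i j b → f i ∩ f j ⊆ f b

/-- The reachability hypergraph of the DAG `(V, Adj)`. -/
def reachHypergraph (V : Finset ℕ) (Adj : ℕ → ℕ → Prop) : NHypergraph :=
  ⟨V, (sourcesOf V Adj).image fun s => V.filter fun v => v ∈ Reach Adj s⟩

/-- The clique completion of a hypergraph. -/
def cliqueCompletion (H : NHypergraph) : SimpleGraph ℕ where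
  Adj u v := u ≠ v ∧ ∃ e ∈ H.edges, u ∈ e ∧ v ∈ e
  symm := by
    constructor
    intro u v h
    obtain ⟨huv, e, he, hu, hv⟩ := h
    exact ⟨huv.symm, e, he, hv, hu⟩
  loopless := by
    constructor
    intro u h
    exact h.1 rfl

/-- `G` has an induced cycle on `n` vertices. -/
def HasInducedCycle (G : SimpleGraph ℕ) (n : ℕ) : Prop :=
  ∃ f : ZMod n → ℕ, Function.Injective f ∧
    ∀ i j : ZMod n, G.Adj (f i) (f j) ↔ (j = i + 1 ∨ i = j + 1)

/-- The number of colorful homomorphisms from `H` to `G` under the coloring `c`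
(with color set `{1, …, |V(H)|}`). -/
def colHomCount (G H : NHypergraph) (c : ℕ → ℕ) : ℕ :=
  Set.ncard {f : ℕ → ℕ | IsHom H G f ∧ (∀ v ∉ H.verts, f v = 0) ∧
    Set.BijOn (fun v => c (f v)) ↑H.verts ↑(Finset.Icc 1 H.verts.card)}

/-- The tensor product of hypergraphs (vertex pairs encoded by `Nat.pair`). -/
def tensor (G H : NHypergraph) : NHypergraph :=
  ⟨(G.verts ×ˢ H.verts).image fun p => Nat.pair p.1 p.2,
    ((G.verts ×ˢ H.verts).image fun p => Nat.pair p.1 p.2).powerset.filter fun e =>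
      (e.image fun m => (Nat.unpair m).1) ∈ G.edges ∧
      (e.image fun m => (Nat.unpair m).2) ∈ H.edges⟩

/-- `Sub(G,H)`: the number of subhypergraphs of `G` isomorphic to `H`. -/
def subCount (G H : NHypergraph) : ℕ :=
  Set.ncard {p : Finset ℕ × Finset (Finset ℕ) |
    p.1 ⊆ G.verts ∧ (∀ e ∈ p.2, e ∈ G.edges ∧ e ⊆ p.1) ∧ Isomorphic H ⟨p.1, p.2⟩}

/-- Vertex renaming used in the construction of `G^H_l`:
core vertices go to the matching vertex of the colorful hyperedge `e` of `G`,
vertices of `H'` outside the core go to their fresh copy indexed by `e`, and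
vertices outside `H'` go to their unique copy. -/
def liftVert (S X : Finset ℕ) (π c : ℕ → ℕ) (e : Finset ℕ) (v : ℕ) : ℕ :=
  if v ∈ X then Nat.pair 0 ((e.filter fun u => c u = π v).sum id)
  else if v ∈ S then Nat.pair 2 (Nat.pair (Encodable.encode e) v)
  else Nat.pair 1 v

/-- The hypergraph `G^H_l` from the hardness construction. -/
def GHl (H G : NHypergraph) (S X : Finset ℕ) (Vp : ℕ → Finset ℕ) (π c : ℕ → ℕ)
    (k : ℕ) : NHypergraph :=
  ⟨(G.verts.image fun v => Nat.pair 0 v) ∪ ((H.verts \ S).image fun v => Nat.pair 1 v) ∪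
      (Finset.range k).biUnion fun i =>
        (G.edges.filter fun e => e.card = k - 1 ∧ e.image c = (Finset.range k).erase i).biUnion
          fun e => (Vp i).image fun v => Nat.pair 2 (Nat.pair (Encodable.encode e) v),
    ((H.edges.filter fun e => e ⊆ H.verts \ S).image fun e => e.image fun v => Nat.pair 1 v) ∪
      (Finset.range k).biUnion fun i =>
        (G.edges.filter fun e => e.card = k - 1 ∧ e.image c = (Finset.range k).erase i).biUnion
          fun e =>
            (H.edges.filter fun e' => ¬ e' ⊆ H.verts \ S ∧
                e' ⊆ X ∪ Vp i ∪ (H.verts \ S)).image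
              fun e' => e'.image (liftVert S X π c e)⟩

/-- The coloring of `G^H_l`. -/
def GHlColor (π c : ℕ → ℕ) (m : ℕ) : ℕ :=
  if (Nat.unpair m).1 = 0 then c (Nat.unpair m).2
  else if (Nat.unpair m).1 = 1 then π (Nat.unpair m).2
  else π (Nat.unpair (Nat.unpair m).2).2

/-- The grouping of the vertices of `G^H_l`: copied vertices first,
then the vertices of `G`, then the vertices of `V^ext`. -/
def GHlGroup (m : ℕ) : ℕ :=
  if (Nat.unpair m).1 = 2 then 0 else if (Nat.unpair m).1 = 0 then 1 else 2

/-!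
Call two vertices co-reachable if some vertex reaches both. Every induced cycle of length at
least four in the co-reachability graph `G` is a reachable-cycle, so `G` is chordal. The simplex
`X` is a clique of `G`, `S` is connected in `G` and every `x i` has a `G`-neighbour in `S`; in a
chordal graph this forces a vertex `v ∈ S` adjacent to all of `X`. If `v` reaches `x i₀`, then
`(X \ {x i₀}) ∪ {v}` is pairwise but not jointly reachable, so by the minimality of `k'` it is
again a `k'`-reachable-simplex, and its `π`-sum is smaller than that of `X` because
`π v < π (x i₀)`.
-/

theorem ZMod.natCast_ne_zero_of_lt {L a : ℕ} (h0 : 0 < a) (h : a < L) : (a : ZMod L) ≠ 0 := by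
  rw [Ne, ZMod.natCast_eq_zero_iff]
  exact Nat.not_dvd_of_pos_of_lt h0 h

theorem ZMod.eq_add_one_iff_val {L : ℕ} [NeZero L] {z w : ZMod L} :
    w = z + 1 ↔ w.val = z.val + 1 ∨ (z.val + 1 = L ∧ w.val = 0) := by
  rw [← (ZMod.val_injective L).eq_iff, ZMod.val_add, ZMod.val_one_eq_one_mod, Nat.add_mod_mod]
  have := w.val_lt
  obtain h | h : z.val + 1 < L ∨ z.val + 1 = L := by have := z.val_lt; omega
  · rw [Nat.mod_eq_of_lt h]; omega
  · rw [h, Nat.mod_self]; omega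

namespace SimpleGraph

variable {α : Type*}

theorem preconnected_induce_of_reflTransGen {G : SimpleGraph α}
    {r : α → α → Prop} (hr : ∀ a b, r a b → G.Adj a b) {S : Set α}
    (hS : ∀ u ∈ S, ∀ v ∈ S, Relation.ReflTransGen (fun a b => r a b ∧ a ∈ S ∧ b ∈ S) u v) :
    (G.induce S).Preconnected := by
  rintro ⟨u, hu⟩ ⟨v, hv⟩
  induction hS u hu v hv with
  | refl => rfl
  | tail _ hbc ih => exact (ih hbc.2.1).trans (Adj.reachable (hr _ _ hbc.1))

def IsChordal (G : SimpleGraph ℕ) : Prop :=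
  ∀ l, 4 ≤ l → ¬ HasInducedCycle G l

theorem hasInducedCycle_of_adj_iff {G : SimpleGraph ℕ} {L : ℕ} (hL : 3 ≤ L) (c : ℕ → ℕ)
    (hc : Set.InjOn c (Set.Iio L))
    (hadj : ∀ i j, i < j → j < L → (G.Adj (c i) (c j) ↔ j = i + 1 ∨ (i = 0 ∧ j + 1 = L))) :
    HasInducedCycle G L := by
  have : NeZero L := ⟨by omega⟩
  refine ⟨fun z => c z.val, fun z w h => ZMod.val_injective L (hc z.val_lt w.val_lt h),
    fun z w => ?_⟩
  simp only [ZMod.eq_add_one_iff_val]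
  have := z.val_lt
  have := w.val_lt
  rcases lt_trichotomy z.val w.val with h | h | h
  · rw [hadj _ _ h w.val_lt]; omega
  · rw [ZMod.val_injective L h]; simp only [SimpleGraph.irrefl, false_iff]; omega
  · rw [G.adj_comm, hadj _ _ h z.val_lt]; omega

def IsInducedPath (G : SimpleGraph α) (p : ℕ → α) (n : ℕ) : Prop :=
  Set.InjOn p (Set.Iic n) ∧ ∀ i j, i < j → j ≤ n → (G.Adj (p i) (p j) ↔ j = i + 1)

namespace IsInducedPath

variable {β : Type*} {G : SimpleGraph α} {p : ℕ → α} {n : ℕ}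

theorem map {G' : SimpleGraph β} (f : G ↪g G') (hp : G.IsInducedPath p n) :
    G'.IsInducedPath (f ∘ p) n :=
  ⟨f.injective.comp_injOn hp.1, fun i j hij hj => f.map_adj_iff.trans (hp.2 i j hij hj)⟩

theorem shift (hp : G.IsInducedPath p n) {m : ℕ} (hm : m ≤ n) :
    G.IsInducedPath (fun j => p (m + j)) (n - m) := by
  refine ⟨fun i hi j hj h => ?_, fun i j hij hj => ?_⟩
  · have := hp.1 (show m + i ≤ n by have := Set.mem_Iic.1 hi; omega)
      (show m + j ≤ n by have := Set.mem_Iic.1 hj; omega) h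
    omega
  · rw [hp.2 _ _ (by omega) (by omega)]; omega

theorem hasInducedCycle_of_adj_ends {G : SimpleGraph ℕ} {p : ℕ → ℕ}
    (hp : G.IsInducedPath p n) (hn : 2 ≤ n) {b : ℕ} (hpb : ∀ j ≤ n, p j ≠ b)
    (hb : ∀ j ≤ n, G.Adj (p j) b ↔ j = 0 ∨ j = n) : HasInducedCycle G (n + 2) := by
  refine hasInducedCycle_of_adj_iff (c := fun j => if j ≤ n then p j else b) (by omega)
    (fun i hi j hj h => ?_) (fun i j hij hj => ?_)
  · simp only [Set.mem_Iio] at hi hj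
    by_cases hi' : i ≤ n <;> by_cases hj' : j ≤ n <;>
      simp only [hi', hj', if_true, if_false] at h
    · exact hp.1 hi' hj' h
    · exact absurd h (hpb i hi')
    · exact absurd h.symm (hpb j hj')
    · omega
  · by_cases hj' : j ≤ n
    · simp only [show i ≤ n by omega, hj', if_true, hp.2 i j hij hj']; omega
    · simp only [show i ≤ n by omega, hj', if_true, if_false, hb i (by omega)]; omega

end IsInducedPath

theorem Walk.isInducedPath_getVert {G : SimpleGraph α} {u v : α} (w : G.Walk u v)
    (hw : w.length = G.dist u v) : G.IsInducedPath w.getVert w.length := by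
  have hdist : ∀ j ≤ w.length, G.dist u (w.getVert j) = j := fun j hj => by
    rw [← length_eq_dist_of_subwalk hw (w.isSubwalk_take j), Walk.take_length]; omega
  refine ⟨fun i hi j hj h => ?_, fun i j hij hj => ⟨fun h => ?_, ?_⟩⟩
  · rw [← hdist i hi, ← hdist j hj, h]
  · have := h.diff_dist_adj (u := u)
    rw [hdist i (by omega), hdist j hj] at this
    omega
  · rintro rfl; exact w.adj_getVert_succ (by omega)

theorem exists_isInducedPath_of_preconnected_induce {G : SimpleGraph α} {S : Set α}
    (hS : (G.induce S).Preconnected) {a v₀ : α} (haS : a ∉ S) (hv₀ : v₀ ∈ S)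
    (ha : ∃ s ∈ S, G.Adj s a) :
    ∃ n p, G.IsInducedPath p n ∧ p 0 = v₀ ∧ p n = a ∧ 1 ≤ n ∧ ∀ j < n, p j ∈ S := by
  obtain ⟨s, hs, hsa⟩ := ha
  have hconn : (G.induce (S ∪ {a})).Connected :=
    connected_induce_union hS Preconnected.of_subsingleton hs rfl hsa
  obtain ⟨w, hw⟩ := (hconn.preconnected ⟨v₀, .inl hv₀⟩ ⟨a, .inr rfl⟩).exists_walk_length_eq_dist
  have hp := (w.isInducedPath_getVert hw).map (Embedding.induce _)
  have hpn : (w.getVert w.length : α) = a := by simp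
  have hpS : ∀ j < w.length, (w.getVert j : α) ∈ S := fun j hj =>
    (w.getVert j).2.resolve_right fun h => by
      have := hp.1 (show j ≤ w.length by omega) (show w.length ≤ w.length from le_rfl)
        (h.trans hpn.symm)
      omega
  refine ⟨w.length, _, hp, by simp, hpn, Nat.one_le_iff_ne_zero.2 fun h0 => haS ?_, hpS⟩
  rw [← hpn, h0, Walk.getVert_zero]
  exact hv₀

namespace IsChordal

variable {G : SimpleGraph ℕ} {S : Set ℕ}

/- If the end `p (n - 1)` of a shortest path from `v₀` to `a` through `S` misses some `b ∈ K`,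
then the part of the path after its last neighbour of `b`, closed up through `b`, is an induced
cycle of length at least four. -/
theorem exists_adj_insert (hG : G.IsChordal) (hS : (G.induce S).Preconnected) {K : Finset ℕ}
    {a v₀ : ℕ} (hK : G.IsClique (insert a (K : Set ℕ))) (haK : a ∉ K)
    (hKS : ∀ b ∈ insert a K, b ∉ S) (hv₀ : v₀ ∈ S) (hv₀K : ∀ b ∈ K, G.Adj v₀ b)
    (ha : ∃ s ∈ S, G.Adj s a) : ∃ v ∈ S, ∀ b ∈ insert a K, G.Adj v b := by
  obtain ⟨n, p, hp, hp0, hpn, hn, hpS⟩ := exists_isInducedPath_of_preconnected_induce hS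
    (hKS a (Finset.mem_insert_self a K)) hv₀ ha
  by_cases hdone : ∀ b ∈ K, G.Adj (p (n - 1)) b
  · refine ⟨p (n - 1), hpS _ (by omega), Finset.forall_mem_insert _ _ _ |>.2 ⟨?_, hdone⟩⟩
    rw [← hpn]
    exact (hp.2 (n - 1) n (by omega) le_rfl).2 (by omega)
  obtain ⟨b, hbK, hbn⟩ := not_forall₂.mp hdone
  set j₀ := Nat.findGreatest (fun j => G.Adj (p j) b) (n - 1)
  have hj₀ : G.Adj (p j₀) b :=
    Nat.findGreatest_spec (P := fun j => G.Adj (p j) b) (Nat.zero_le _) (hp0 ▸ hv₀K b hbK)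
  have hj₀n : j₀ < n - 1 := lt_of_le_of_ne (Nat.findGreatest_le _) fun h => hbn (h ▸ hj₀)
  have hab : G.Adj a b := hK (by simp) (by simp [hbK]) (ne_of_mem_of_not_mem hbK haK).symm
  refine (hG (n - j₀ + 2) (by omega) ((hp.shift (m := j₀) (by omega)).hasInducedCycle_of_adj_ends
    (b := b) (by omega) (fun j hj h => ?_) fun j hj => ⟨fun h => ?_, ?_⟩)).elim
  · obtain hj | rfl : j₀ + j < n ∨ j = n - j₀ := by omega
    · exact hKS b (Finset.mem_insert_of_mem hbK) (h ▸ hpS _ hj)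
    · rw [show j₀ + (n - j₀) = n by omega, hpn] at h
      exact haK (h ▸ hbK)
  · by_contra hj'
    exact Nat.findGreatest_is_greatest (show j₀ < j₀ + j by omega) (by omega) h
  · rintro (rfl | rfl)
    · simpa using hj₀
    · rw [show j₀ + (n - j₀) = n by omega, hpn]
      exact hab

theorem exists_forall_adj (hG : G.IsChordal) (hS : (G.induce S).Connected) (K : Finset ℕ)
    (hK : G.IsClique (K : Set ℕ)) (hKS : ∀ b ∈ K, b ∉ S) (hKadj : ∀ b ∈ K, ∃ s ∈ S, G.Adj s b) :
    ∃ v ∈ S, ∀ b ∈ K, G.Adj v b := by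
  induction K using Finset.induction_on with
  | empty =>
    obtain ⟨v⟩ := hS.nonempty
    exact ⟨v, v.2, by simp⟩
  | insert a K haK ih =>
    rw [Finset.coe_insert] at hK
    obtain ⟨v₀, hv₀, hv₀K⟩ := ih (hK.subset (Set.subset_insert _ _))
      (fun b hb => hKS b (Finset.mem_insert_of_mem hb))
      (fun b hb => hKadj b (Finset.mem_insert_of_mem hb))
    exact hG.exists_adj_insert hS.preconnected hK haK hKS hv₀ hv₀K
      (hKadj a (Finset.mem_insert_self a K))

end IsChordal

end SimpleGraph

section ReachSimplex

variable {V : Finset ℕ} {Adj : ℕ → ℕ → Prop}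

theorem mem_of_mem_reach (hAdjV : ∀ u v, Adj u v → u ∈ V ∧ v ∈ V) {u a : ℕ} (hu : u ∈ V)
    (h : a ∈ Reach Adj u) : a ∈ V := by
  induction h with
  | refl => exact hu
  | tail _ hbc _ => exact (hAdjV _ _ hbc).2

theorem lt_of_mem_reach {π : ℕ → ℕ} (htopo : ∀ u v, Adj u v → π u < π v) {a b : ℕ}
    (h : b ∈ Reach Adj a) (hne : a ≠ b) : π a < π b := by
  induction h with
  | refl => exact absurd rfl hne
  | @tail c d _ hcd ih =>
    by_cases hac : a = c
    · exact hac ▸ htopo c d hcd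
    · exact (ih hac).trans (htopo c d hcd)

def JointlyReachable (V : Finset ℕ) (Adj : ℕ → ℕ → Prop) (A : Set ℕ) : Prop :=
  ∃ u ∈ V, A ⊆ Reach Adj u

/-- The clique completion of the reachability hypergraph of `(V, Adj)`. -/
def coReachGraph (V : Finset ℕ) (Adj : ℕ → ℕ → Prop) : SimpleGraph ℕ :=
  SimpleGraph.fromRel fun a b => JointlyReachable V Adj {a, b}

theorem coReachGraph_adj {a b : ℕ} :
    (coReachGraph V Adj).Adj a b ↔ a ≠ b ∧ JointlyReachable V Adj {a, b} := by
  simp [coReachGraph, Set.pair_comm]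

theorem coReachGraph_adj_of_mem_reach {u a b : ℕ} (hu : u ∈ V) (ha : a ∈ Reach Adj u)
    (hb : b ∈ Reach Adj u) (hne : a ≠ b) : (coReachGraph V Adj).Adj a b :=
  coReachGraph_adj.2 ⟨hne, u, hu, Set.insert_subset_iff.2 ⟨ha, Set.singleton_subset_iff.2 hb⟩⟩

theorem hasReachCycle_of_hasInducedCycle (hAdjV : ∀ u v, Adj u v → u ∈ V ∧ v ∈ V) {l : ℕ}
    (hl : 4 ≤ l) (h : HasInducedCycle (coReachGraph V Adj) l) : HasReachCycle V Adj l := by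
  obtain ⟨f, hf, hadj⟩ := h
  have : NeZero l := ⟨by omega⟩
  have hne : ∀ a : ℕ, 0 < a → a < l → (a : ZMod l) ≠ 0 := fun _ => ZMod.natCast_ne_zero_of_lt
  have h1 : (1 : ZMod l) ≠ 0 := by exact_mod_cast hne 1 (by omega) (by omega)
  have h2 : (2 : ZMod l) ≠ 0 := by exact_mod_cast hne 2 (by omega) (by omega)
  have h3 : (3 : ZMod l) ≠ 0 := by exact_mod_cast hne 3 (by omega) (by omega)
  have hcons : ∀ u ∈ V, ∀ i j, f i ∈ Reach Adj u → f j ∈ Reach Adj u →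
      i = j ∨ j = i + 1 ∨ i = j + 1 := fun u hu i j hi hj =>
    or_iff_not_imp_left.2 fun hij =>
      (hadj i j).1 (coReachGraph_adj_of_mem_reach hu hi hj (hf.ne hij))
  have hpin : ∀ u ∈ V, ∀ z k, f z ∈ Reach Adj u → f (z + 1) ∈ Reach Adj u →
      f k ∈ Reach Adj u → k = z ∨ k = z + 1 := by
    intro u hu z k hz hz1 hk
    have := hcons u hu k z hk hz
    have := hcons u hu k (z + 1) hk hz1
    grind
  have hedge : ∀ z, JointlyReachable V Adj {f z, f (z + 1)} := fun z =>
    (coReachGraph_adj.1 ((hadj z (z + 1)).2 (.inl rfl))).2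
  choose y hyV hy using hedge
  have hyz : ∀ z, f z ∈ Reach Adj (y z) ∧ f (z + 1) ∈ Reach Adj (y z) := fun z =>
    ⟨hy z (by simp), hy z (by simp)⟩
  refine ⟨f, y, hf, fun s t hst => ?_, fun z => mem_of_mem_reach hAdjV (hyV z) (hyz z).1, hyV,
    hyz, fun v hv h2v => ?_⟩
  · have := hpin _ (hyV s) s t (hyz s).1 (hyz s).2 (hst ▸ (hyz t).1)
    have := hpin _ (hyV s) s (t + 1) (hyz s).1 (hyz s).2 (hst ▸ (hyz t).2)
    grind
  · obtain ⟨_, _, ⟨⟨i, rfl⟩, hi⟩, ⟨⟨j, rfl⟩, hj⟩, hij⟩ :=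
      (Set.one_lt_ncard_iff ((Set.finite_range f).inter_of_left _)).1 h2v
    obtain ⟨z, hz, hz1⟩ : ∃ z, f z ∈ Reach Adj v ∧ f (z + 1) ∈ Reach Adj v := by
      rcases hcons v hv i j hi hj with rfl | rfl | rfl
      · exact absurd rfl hij
      · exact ⟨i, hi, hj⟩
      · exact ⟨j, hj, hi⟩
    refine ⟨z, Set.Subset.antisymm ?_ (Set.insert_subset_iff.2
      ⟨⟨⟨z, rfl⟩, hz⟩, Set.singleton_subset_iff.2 ⟨⟨z + 1, rfl⟩, hz1⟩⟩)⟩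
    rintro _ ⟨⟨k, rfl⟩, hk⟩
    rcases hpin v hv z k hz hz1 hk with rfl | rfl <;> simp

theorem isChordal_coReachGraph (hAdjV : ∀ u v, Adj u v → u ∈ V ∧ v ∈ V)
    (hnocyc : ∀ k, 3 ≤ k → ¬ HasReachCycle V Adj k) : (coReachGraph V Adj).IsChordal :=
  fun l hl h => hnocyc l (by omega) (hasReachCycle_of_hasInducedCycle hAdjV hl h)

theorem connected_induce_coReachGraph (hAdjV : ∀ u v, Adj u v → u ∈ V ∧ v ∈ V)
    (hirr : ∀ a, ¬ Adj a a) {S : Finset ℕ} (hS : S.Nonempty)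
    (hconn : ∀ u ∈ S, ∀ v ∈ S,
      Relation.ReflTransGen (fun a b => (Adj a b ∨ Adj b a) ∧ a ∈ S ∧ b ∈ S) u v) :
    ((coReachGraph V Adj).induce S).Connected := by
  have harc : ∀ a b, Adj a b → (coReachGraph V Adj).Adj a b := fun a b h =>
    coReachGraph_adj_of_mem_reach (hAdjV a b h).1 .refl (.single h) fun hab => hirr a (hab ▸ h)
  obtain ⟨s, hs⟩ := hS
  exact (SimpleGraph.connected_iff _).2 ⟨SimpleGraph.preconnected_induce_of_reflTransGen
    (fun a b h => h.elim (harc a b) fun h => (harc b a h).symm) hconn, ⟨⟨s, hs⟩⟩⟩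

theorem IsReachSimplexPair.isClique {k : ℕ} {x y : Fin k → ℕ}
    (h : IsReachSimplexPair V Adj x y) (hk : 3 ≤ k) :
    (coReachGraph V Adj).IsClique (Set.range x) := by
  rintro _ ⟨i, rfl⟩ _ ⟨j, rfl⟩ hij
  obtain ⟨t, hti, htj⟩ := Fin.exists_ne_and_ne_of_two_lt i j (by omega)
  exact coReachGraph_adj_of_mem_reach (h.2.2.2.1 t) (h.2.2.2.2.1 t i hti.symm)
    (h.2.2.2.2.1 t j htj.symm) hij

theorem IsReachSimplexPair.not_jointlyReachable {k : ℕ} {x y : Fin k → ℕ}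
    (h : IsReachSimplexPair V Adj x y) : ¬ JointlyReachable V Adj (Set.range x) :=
  fun ⟨u, hu, hux⟩ => h.2.2.2.2.2 ⟨u, hu, fun i => hux ⟨i, rfl⟩⟩

theorem exists_isReachSimplexPair_of_minimal {A : Finset ℕ} {n : ℕ} (hAn : A.card = n)
    (hAV : ∀ a ∈ A, a ∈ V) (hA : ¬ JointlyReachable V Adj A)
    (hAmin : ∀ a ∈ A, JointlyReachable V Adj ↑(A.erase a)) :
    ∃ x y : Fin n → ℕ, IsReachSimplexPair V Adj x y ∧ Finset.univ.image x = A := by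
  set e := A.orderIsoOfFin hAn
  set x : Fin n → ℕ := fun i => e i
  have hxA : ∀ i, x i ∈ A := fun i => (e i).2
  have hx : Function.Injective x := fun i j h => e.injective (Subtype.ext h)
  have hAx : ∀ a ∈ A, ∃ i, x i = a := fun a ha => ⟨e.symm ⟨a, ha⟩, by simp [x]⟩
  choose! u huV hu using hAmin
  have hreach : ∀ i j, j ≠ i → x j ∈ Reach Adj (u (x i)) := fun i j hji =>
    hu _ (hxA i) (Finset.mem_coe.2 (Finset.mem_erase.2 ⟨hx.ne hji, hxA j⟩))
  refine ⟨x, fun i => u (x i), ⟨hx, fun i j hij => ?_, fun i => hAV _ (hxA i),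
    fun i => huV _ (hxA i), hreach, ?_⟩, ?_⟩
  · by_contra hne
    refine hA ⟨u (x i), huV _ (hxA i), fun a ha => ?_⟩
    obtain ⟨k, rfl⟩ := hAx a ha
    by_cases hki : k = i
    · rw [hki, show u (x i) = u (x j) from hij]; exact hreach j i hne
    · exact hreach i k hki
  · rintro ⟨v, hv, hvx⟩
    exact hA ⟨v, hv, fun a ha => by obtain ⟨k, rfl⟩ := hAx a ha; exact hvx k⟩
  · ext a
    simp only [Finset.mem_image, Finset.mem_univ, true_and]
    exact ⟨fun ⟨i, hi⟩ => hi ▸ hxA i, hAx a⟩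

theorem exists_isReachSimplexPair_of_isClique {A : Finset ℕ} {n : ℕ} (hAn : A.card = n)
    (hA0 : A.Nonempty) (hAV : ∀ a ∈ A, a ∈ V) (hA : (coReachGraph V Adj).IsClique (A : Set ℕ))
    (hAJ : ¬ JointlyReachable V Adj A) (hmin : ∀ k, 3 ≤ k → HasReachSimplex V Adj k → n ≤ k) :
    ∃ x y : Fin n → ℕ, IsReachSimplexPair V Adj x y ∧ Finset.univ.image x = A := by
  obtain ⟨B, hBA, hB⟩ := exists_minimal_le_of_wellFoundedLT
    (fun B : Finset ℕ => ¬ JointlyReachable V Adj B) A hAJ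
  have hBmin : ∀ b ∈ B, JointlyReachable V Adj ↑(B.erase b) := fun b hb => by
    by_contra h
    exact Finset.notMem_erase b B (hB.2 h (Finset.erase_subset b B) hb)
  have hB3 : 3 ≤ B.card := by
    by_contra! h
    apply hB.1
    interval_cases hc : B.card
    · obtain ⟨a, ha⟩ := hA0
      rw [Finset.card_eq_zero.1 hc, Finset.coe_empty]
      exact ⟨a, hAV a ha, Set.empty_subset _⟩
    · obtain ⟨a, rfl⟩ := Finset.card_eq_one.1 hc
      rw [Finset.coe_singleton]
      exact ⟨a, hAV a (hBA (Finset.mem_singleton_self a)), Set.singleton_subset_iff.2 .refl⟩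
    · obtain ⟨a, c, hac, rfl⟩ := Finset.card_eq_two.1 hc
      rw [Finset.coe_pair]
      exact (coReachGraph_adj.1 (hA (hBA (by simp)) (hBA (by simp)) hac)).2
  obtain ⟨x, y, hxy, -⟩ :=
    exists_isReachSimplexPair_of_minimal rfl (fun b hb => hAV b (hBA hb)) hB.1 hBmin
  obtain rfl : B = A := Finset.eq_of_subset_of_card_le hBA (hAn ▸ hmin _ hB3 ⟨x, y, hxy⟩)
  exact exists_isReachSimplexPair_of_minimal hAn hAV hAJ hBmin

theorem not_jointlyReachable_insert_erase {X : Finset ℕ} (hX : ¬ JointlyReachable V Adj X)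
    {v x₀ : ℕ} (hvx₀ : x₀ ∈ Reach Adj v) :
    ¬ JointlyReachable V Adj ↑(insert v (X.erase x₀)) := by
  rintro ⟨u, hu, huT⟩
  refine hX ⟨u, hu, fun a ha => ?_⟩
  by_cases hax : a = x₀
  · exact hax ▸ Relation.ReflTransGen.trans (huT (by simp)) hvx₀
  · exact huT (by simp [hax, Finset.mem_coe.1 ha])

theorem IsReachSimplexPair.exists_forall_adj (hAdjV : ∀ u v, Adj u v → u ∈ V ∧ v ∈ V)
    (hnocyc : ∀ k, 3 ≤ k → ¬ HasReachCycle V Adj k) {k : ℕ} {x y : Fin k → ℕ}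
    (hxy : IsReachSimplexPair V Adj x y) (hk : 3 ≤ k) {S : Set ℕ}
    (hS : ((coReachGraph V Adj).induce S).Connected) (hSV : S ⊆ V)
    (hSx : ∀ s ∈ S, s ∉ Set.range x) (hxS : ∀ i, ∃ s ∈ S, x i ∈ Reach Adj s) :
    ∃ v ∈ S, ∀ i, (coReachGraph V Adj).Adj v (x i) := by
  have hXS : ∀ b ∈ Finset.univ.image x, b ∉ S := by
    simp only [Finset.mem_image, Finset.mem_univ, true_and]
    rintro _ ⟨i, rfl⟩ hi
    exact hSx _ hi ⟨i, rfl⟩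
  obtain ⟨v, hvS, hv⟩ := (isChordal_coReachGraph hAdjV hnocyc).exists_forall_adj hS
    (Finset.univ.image x) (by simpa using hxy.isClique hk) hXS fun b hb => by
      obtain ⟨i, -, rfl⟩ := Finset.mem_image.1 hb
      obtain ⟨s, hs, hsx⟩ := hxS i
      exact ⟨s, hs,
        coReachGraph_adj_of_mem_reach (hSV hs) .refl hsx fun h => hXS _ hb (h ▸ hs)⟩
  exact ⟨v, hvS, fun i => hv _ (Finset.mem_image_of_mem x (Finset.mem_univ i))⟩

theorem IsReachSimplexPair.exists_exchange {k : ℕ} {x y : Fin k → ℕ}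
    (hxy : IsReachSimplexPair V Adj x y) (hk : 3 ≤ k)
    (hmin : ∀ l, 3 ≤ l → HasReachSimplex V Adj l → k ≤ l) {v : ℕ} (hv : v ∈ V)
    (hvx : v ∉ Set.range x) (hvX : ∀ i, (coReachGraph V Adj).Adj v (x i)) {i₀ : Fin k}
    (hi₀ : x i₀ ∈ Reach Adj v) :
    ∃ x₂ y₂ : Fin k → ℕ, IsReachSimplexPair V Adj x₂ y₂ ∧
      Finset.univ.image x₂ = insert v ((Finset.univ.image x).erase (x i₀)) := by
  set X := Finset.univ.image x
  have hvX' : v ∉ X.erase (x i₀) := fun h => hvx (by simpa [X] using Finset.mem_of_mem_erase h)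
  have hXG : (coReachGraph V Adj).IsClique (X : Set ℕ) := by simpa [X] using hxy.isClique hk
  refine exists_isReachSimplexPair_of_isClique ?_ (Finset.insert_nonempty _ _) ?_ ?_
    (not_jointlyReachable_insert_erase (by simpa [X] using hxy.not_jointlyReachable) hi₀) hmin
  · rw [Finset.card_insert_of_notMem hvX', Finset.card_erase_of_mem (by simp [X]),
      Finset.card_image_of_injective _ hxy.1, Finset.card_univ, Fintype.card_fin]
    omega
  · simp only [X, Finset.mem_insert, Finset.mem_erase, Finset.mem_image, Finset.mem_univ,
      true_and]
    rintro _ (rfl | ⟨-, i, rfl⟩)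
    exacts [hv, hxy.2.2.1 i]
  · rw [Finset.coe_insert, SimpleGraph.isClique_insert]
    refine ⟨hXG.subset (Finset.coe_subset.2 (Finset.erase_subset _ _)), fun b hb _ => ?_⟩
    obtain ⟨i, -, rfl⟩ := Finset.mem_image.1 (Finset.mem_of_mem_erase hb)
    exact hvX i

end ReachSimplex

theorem stmt9_general (V : Finset ℕ) (Adj : ℕ → ℕ → Prop) (π : ℕ → ℕ)
    (hAdjV : ∀ u v, Adj u v → u ∈ V ∧ v ∈ V)
    (htopo : ∀ u v, Adj u v → π u < π v)
    (hnocyc : ∀ k, 3 ≤ k → ¬ HasReachCycle V Adj k)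
    (k' : ℕ) (hk' : 3 ≤ k')
    (x y : Fin k' → ℕ) (hxy : IsReachSimplexPair V Adj x y)
    (hmin : ∀ k, 3 ≤ k → HasReachSimplex V Adj k → k' ≤ k)
    (hminord : ∀ x₂ y₂ : Fin k' → ℕ, IsReachSimplexPair V Adj x₂ y₂ →
      ∑ i, π (x i) ≤ ∑ i, π (x₂ i))
    (S : Finset ℕ) (hSV : ∀ v ∈ S, v ∈ V ∧ v ∉ Set.range x)
    (hconn : ∀ u ∈ S, ∀ v ∈ S,
      Relation.ReflTransGen (fun a b => (Adj a b ∨ Adj b a) ∧ a ∈ S ∧ b ∈ S) u v)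
    (hreach : ∀ v ∈ S, ∃ i, x i ∈ Reach Adj v) :
    ¬ ∀ i, ∃ s ∈ S, x i ∈ Reach Adj s := by
  intro hall
  obtain ⟨s, hs, -⟩ := hall ⟨0, by omega⟩
  have hS := connected_induce_coReachGraph hAdjV (fun a h => (htopo a a h).false) ⟨s, hs⟩ hconn
  obtain ⟨v, hvS, hvX⟩ := hxy.exists_forall_adj hAdjV hnocyc hk' hS (fun v hv => (hSV v hv).1)
    (fun v hv => (hSV v hv).2) hall
  obtain ⟨i₀, hi₀⟩ := hreach v hvS
  obtain ⟨hvV, hvx⟩ := hSV v hvS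
  obtain ⟨x₂, y₂, h₂, himg⟩ := hxy.exists_exchange hk' hmin hvV hvx hvX hi₀
  set X := Finset.univ.image x
  have hxX : x i₀ ∈ X := Finset.mem_image_of_mem x (Finset.mem_univ i₀)
  refine (hminord x₂ y₂ h₂).not_gt ?_
  calc ∑ i, π (x₂ i) = π v + ∑ b ∈ X.erase (x i₀), π b := by
        rw [← Finset.sum_insert fun h => hvx (by simpa [X] using Finset.mem_of_mem_erase h),
          ← himg, Finset.sum_image fun i _ j _ h => h₂.1 h]
    _ < π (x i₀) + ∑ b ∈ X.erase (x i₀), π b := by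
      gcongr
      exact lt_of_mem_reach htopo hi₀ fun h => hvx ⟨i₀, h.symm⟩
    _ = ∑ i, π (x i) := by
      rw [Finset.add_sum_erase _ _ hxX, Finset.sum_image fun i _ j _ h => hxy.1 h]

theorem stmt9 (V : Finset ℕ) (Adj : ℕ → ℕ → Prop) (π : ℕ → ℕ)
    (hAdjV : ∀ u v, Adj u v → u ∈ V ∧ v ∈ V)
    (hπ : Set.BijOn π ↑V ↑(Finset.Icc 1 V.card))
    (htopo : ∀ u v, Adj u v → π u < π v)
    (hnocyc : ∀ k, 3 ≤ k → ¬ HasReachCycle V Adj k)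
    (k' : ℕ) (hk' : 3 ≤ k')
    (x y : Fin k' → ℕ) (hxy : IsReachSimplexPair V Adj x y)
    (hmin : ∀ k, 3 ≤ k → HasReachSimplex V Adj k → k' ≤ k)
    (hminord : ∀ x₂ y₂ : Fin k' → ℕ, IsReachSimplexPair V Adj x₂ y₂ →
      ∑ i, π (x i) ≤ ∑ i, π (x₂ i))
    (S : Finset ℕ) (hSV : ∀ v ∈ S, v ∈ V ∧ v ∉ Set.range x)
    (hconn : ∀ u ∈ S, ∀ v ∈ S,
      Relation.ReflTransGen (fun a b => (Adj a b ∨ Adj b a) ∧ a ∈ S ∧ b ∈ S) u v)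
    (hreach : ∀ v ∈ S, ∃ i, x i ∈ Reach Adj v) :
    ¬ ∀ i, ∃ s ∈ S, x i ∈ Reach Adj s :=
  stmt9_general V Adj π hAdjV htopo hnocyc k' hk' x y hxy hmin hminord S hSV hconn hreach
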